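/- If Σ and Ψ are n×n positive definite real matrices with Ψ diagonal, Σ not diagonal, and det(Ψ) = det(Σ), then there exists an index i with Ψ_{ii} < Σ_{ii} and an index j with (Ψ⁻¹)_{jj} < (Σ⁻¹)_{jj}. -/

import Mathlib

/-!
Rescaling `S` by `diag(S)^{-1/2}` on both sides gives a positive definite correlation matrix `C`
with unit diagonal and `det S = det C · ∏ Sᵢᵢ`. The eigenvalues of `C` are positive with sum `n`,
so `x ≤ exp (x - 1)` bounds their product by `1`, strictly unless `C = 1`, i.e. unless `S` is
diagonal: this is the strict Hadamard inequality `det S < ∏ Sᵢᵢ`. If every `Ψᵢᵢ ≥ Sᵢᵢ`, then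
`det Ψ = ∏ Ψᵢᵢ ≥ ∏ Sᵢᵢ > det S`. The statement about precisions is the same argument applied to
`S⁻¹` and `Ψ⁻¹`, which is again diagonal with the same determinant as `S⁻¹`.
-/

open Finset

theorem Finset.prod_lt_one_of_sum_eq_card {ι : Type*} {s : Finset ι} {x : ι → ℝ}
    (hpos : ∀ i ∈ s, 0 < x i) (hsum : ∑ i ∈ s, x i = #s) (hne : ∃ i ∈ s, x i ≠ 1) :
    ∏ i ∈ s, x i < 1 := by
  obtain ⟨i₀, hi₀, hx⟩ := hne
  have hle : ∀ i ∈ s, x i ≤ Real.exp (x i - 1) := fun i _ ↦ by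
    linarith [Real.add_one_le_exp (x i - 1)]
  have hlt : x i₀ < Real.exp (x i₀ - 1) := by
    linarith [Real.add_one_lt_exp (x := x i₀ - 1) (sub_ne_zero.mpr hx)]
  calc ∏ i ∈ s, x i < ∏ i ∈ s, Real.exp (x i - 1) := prod_lt_prod hpos hle ⟨i₀, hi₀, hlt⟩
    _ = Real.exp (∑ i ∈ s, (x i - 1)) := (Real.exp_sum _ _).symm
    _ = 1 := by simp [sum_sub_distrib, hsum]

namespace Matrix

variable {n : Type*} [Fintype n] [DecidableEq n]

theorem IsDiag.inv {α : Type*} [CommRing α] {A : Matrix n n α} (hA : A.IsDiag) : A⁻¹.IsDiag := by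
  rw [← hA.diagonal_diag, inv_diagonal]
  exact isDiag_diagonal _

theorem IsHermitian.eq_one_of_eigenvalues_eq_one {𝕜 : Type*} [RCLike 𝕜] {A : Matrix n n 𝕜}
    (hA : A.IsHermitian) (h : ∀ i, hA.eigenvalues i = 1) : A = 1 := by
  rw [hA.spectral_theorem]
  simp [Function.comp_def, h]

theorem PosDef.det_lt_one_of_diag_eq_one {A : Matrix n n ℝ} (hA : A.PosDef)
    (hdiag : ∀ i, A i i = 1) (hne : A ≠ 1) : A.det < 1 := by
  have hsum : ∑ i, hA.1.eigenvalues i = Fintype.card n := by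
    simpa [trace, hdiag] using hA.1.trace_eq_sum_eigenvalues.symm
  rw [hA.1.det_eq_prod_eigenvalues]
  refine prod_lt_one_of_sum_eq_card (fun i _ ↦ hA.eigenvalues_pos i) hsum ?_
  by_contra! h
  exact hne (hA.1.eq_one_of_eigenvalues_eq_one fun i ↦ h i (mem_univ i))

theorem PosDef.det_lt_prod_diag {A : Matrix n n ℝ} (hA : A.PosDef) (hA' : ¬A.IsDiag) :
    A.det < ∏ i, A i i := by
  set d : n → ℝ := fun i ↦ Real.sqrt (A i i)
  have hd : ∀ i, 0 < d i := fun i ↦ Real.sqrt_pos.mpr hA.diag_pos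
  have hdd : ∀ i, d i * d i = A i i := fun i ↦ Real.mul_self_sqrt hA.diag_pos.le
  set D := diagonal fun i ↦ (d i)⁻¹
  have hDunit : IsUnit D := by
    simpa [D, isUnit_iff_isUnit_det, det_diagonal] using (prod_pos fun i _ ↦ hd i).ne'
  have hC : (D * A * D).PosDef := by
    simpa [D, star_eq_conjTranspose] using (IsUnit.posDef_star_left_conjugate_iff hDunit).mpr hA
  have hCapply : ∀ i j, (D * A * D) i j = (d i)⁻¹ * A i j * (d j)⁻¹ := by
    simp [D, diagonal_mul, mul_diagonal]
  have hCdiag : ∀ i, (D * A * D) i i = 1 := fun i ↦ by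
    rw [hCapply, ← hdd i]
    field_simp [(hd i).ne']
  have hCne : D * A * D ≠ 1 := by
    obtain ⟨i, j, hij, hAij⟩ : ∃ i j, i ≠ j ∧ A i j ≠ 0 := by
      simpa [IsDiag, Pairwise] using hA'
    intro hC1
    have := congr_fun₂ hC1 i j
    simp [hCapply, one_apply_ne hij, hAij, (hd i).ne', (hd j).ne'] at this
  have hdetC : (D * A * D).det * ∏ i, A i i = A.det := by
    simp only [det_mul, D, det_diagonal, ← hdd, prod_mul_distrib, prod_inv_distrib]
    field_simp [(prod_pos fun i _ ↦ hd i).ne']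
  calc A.det = (D * A * D).det * ∏ i, A i i := hdetC.symm
    _ < 1 * ∏ i, A i i := by
      gcongr
      · exact prod_pos fun i _ ↦ hA.diag_pos
      · exact hC.det_lt_one_of_diag_eq_one hCdiag hCne
    _ = ∏ i, A i i := one_mul _

theorem PosDef.exists_diag_lt_of_det_eq {S Ψ : Matrix n n ℝ} (hS : S.PosDef) (hΨ : Ψ.IsDiag)
    (hS' : ¬S.IsDiag) (hdet : Ψ.det = S.det) : ∃ i, Ψ i i < S i i := by
  by_contra! h
  have hΨdet : Ψ.det = ∏ i, Ψ i i := by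
    conv_lhs => rw [← hΨ.diagonal_diag]
    exact det_diagonal
  have : ∏ i, S i i ≤ ∏ i, Ψ i i := prod_le_prod (fun i _ ↦ hS.diag_pos.le) (fun i _ ↦ h i)
  linarith [hS.det_lt_prod_diag hS']

end Matrix

theorem generalized_variance_matching_tradeoff_general
    (n : ℕ) (S Ψ : Matrix (Fin n) (Fin n) ℝ)
    (hS : S.PosDef)
    (hΨdiag : Ψ.IsDiag) (hSnotdiag : ¬ S.IsDiag)
    (hdet : Ψ.det = S.det) :
    (∃ i, Ψ i i < S i i) ∧ (∃ j, Ψ⁻¹ j j < S⁻¹ j j) := by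
  have hSinv : S⁻¹⁻¹ = S := Matrix.nonsing_inv_nonsing_inv S hS.det_pos.ne'.isUnit
  refine ⟨hS.exists_diag_lt_of_det_eq hΨdiag hSnotdiag hdet,
    hS.inv.exists_diag_lt_of_det_eq hΨdiag.inv (fun h ↦ hSnotdiag ?_) ?_⟩
  · simpa [hSinv] using h.inv
  · rw [Matrix.det_nonsing_inv, Matrix.det_nonsing_inv, hdet]

theorem generalized_variance_matching_tradeoff
    (n : ℕ) (S Ψ : Matrix (Fin n) (Fin n) ℝ)
    (hS : S.PosDef) (hΨ : Ψ.PosDef)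
    (hΨdiag : Ψ.IsDiag) (hSnotdiag : ¬ S.IsDiag)
    (hdet : Ψ.det = S.det) :
    (∃ i, Ψ i i < S i i) ∧ (∃ j, Ψ⁻¹ j j < S⁻¹ j j) :=
  generalized_variance_matching_tradeoff_general n S Ψ hS hΨdiag hSnotdiag hdet
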